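/- Let G be a connected unicyclic graph on n vertices. Then α(G) + μ(G) = n − 1 if and only if every edge of its unique cycle C is α-critical (i.e., α(G − e) > α(G) for all e ∈ E(C)). -/

import Mathlib

/-- A set of vertices is independent if no two of its vertices are adjacent. -/
def SimpleGraph.IsIndepSet' {V : Type*} (G : SimpleGraph V) (s : Set V) : Prop :=
  s.Pairwise (fun a b => ¬ G.Adj a b)

/-- The independence number: the maximum cardinality of an independent set. -/
noncomputable def indepNum {V : Type*} (G : SimpleGraph V) : ℕ :=
  sSup {n | ∃ s : Set V, G.IsIndepSet' s ∧ s.ncard = n}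

/-- The matching number: the maximum cardinality of a matching. -/
noncomputable def matchNum {V : Type*} (G : SimpleGraph V) : ℕ :=
  sSup {n | ∃ M : SimpleGraph.Subgraph G, M.IsMatching ∧ M.edgeSet.ncard = n}

/-- A maximum independent set. -/
def IsMaxIndepSet {V : Type*} (G : SimpleGraph V) (s : Set V) : Prop :=
  G.IsIndepSet' s ∧ s.ncard = indepNum G

/-- The core: intersection of all maximum independent sets. -/
noncomputable def core {V : Type*} (G : SimpleGraph V) : Set V :=
  ⋂₀ {s | IsMaxIndepSet G s}

/-- Open neighborhood of a set. -/
def nbhdSet {V : Type*} (G : SimpleGraph V) (s : Set V) : Set V :=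
  {v | ∃ w ∈ s, G.Adj v w}

/-- Closed neighborhood of a set. -/
def closedNbhdSet {V : Type*} (G : SimpleGraph V) (s : Set V) : Set V :=
  s ∪ nbhdSet G s

/-- The tree component of `G - xy` containing `x`. -/
noncomputable def treeComp {V : Type*} (G : SimpleGraph V) (x y : V) :
    SimpleGraph ((G.deleteEdges {s(x,y)}).connectedComponentMk x).supp :=
  (G.deleteEdges {s(x,y)}).induce ((G.deleteEdges {s(x,y)}).connectedComponentMk x).supp


/-!
Always `α + μ ≤ n`, since each matching edge has an endpoint outside a given independent set.
For a forest equality holds: a vertex with at most one neighbour joins the independent set and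
its pendant edge, if any, joins the matching. Deleting a cycle edge `e` of a unicyclic graph
leaves a tree, so `α(G - e) + μ(G - e) = n`, where `μ(G - e) ≤ μ(G)` and
`α(G - e) ≤ α(G) + 1`. If `α + μ = n - 1` this forces `α(G - e) = α(G) + 1` for every cycle
edge. Conversely, a maximum matching misses some cycle edge `e`, so `μ(G - e) = μ(G)`, and if
`e` is `α`-critical then `α(G) + 1 + μ(G) = n`.
-/

open SimpleGraph hiding indepNum

section

variable {V : Type*} {G H : SimpleGraph V}

lemma SimpleGraph.Subgraph.IsMatching.eq_of_mem_edgeSet_of_mem {M : G.Subgraph}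
    (hM : M.IsMatching) {e e' : Sym2 V} (he : e ∈ M.edgeSet) (he' : e' ∈ M.edgeSet) {v : V}
    (hv : v ∈ e) (hv' : v ∈ e') : e = e' := by
  have hadj : M.Adj v (Sym2.Mem.other hv) := by rwa [← Subgraph.mem_edgeSet, Sym2.other_spec]
  have hadj' : M.Adj v (Sym2.Mem.other hv') := by rwa [← Subgraph.mem_edgeSet, Sym2.other_spec]
  rw [← Sym2.other_spec hv, ← Sym2.other_spec hv', hM.eq_of_adj_left hadj hadj']

lemma SimpleGraph.Walk.IsCycle.exists_mem_edges_notMem_edgeSet {v : V} {c : G.Walk v v}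
    (hc : c.IsCycle) {M : G.Subgraph} (hM : M.IsMatching) : ∃ e ∈ c.edges, e ∉ M.edgeSet := by
  by_contra! hall
  have hfirst := hall _ (Walk.mk_start_snd_mem_edges hc.not_nil)
  have hlast := hall _ (Walk.mk_penultimate_end_mem_edges hc.not_nil)
  exact hc.snd_ne_penultimate (hM.eq_of_adj_left hfirst hlast.symm)

lemma SimpleGraph.IsIndepSet'.insert {A : Set V} (hA : G.IsIndepSet' A) {u : V}
    (hu : ∀ a ∈ A, ¬G.Adj u a) : G.IsIndepSet' (insert u A) :=
  Set.pairwise_insert.mpr ⟨hA, fun a ha _ => ⟨hu a ha, fun h => hu a ha h.symm⟩⟩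

lemma SimpleGraph.Subgraph.IsMatching.sup_subgraphOfAdj {M : G.Subgraph} (hM : M.IsMatching)
    {u w : V} (hadj : G.Adj u w) (hu : u ∉ M.verts) (hw : w ∉ M.verts) :
    (M ⊔ G.subgraphOfAdj hadj).IsMatching := by
  refine hM.sup (.subgraphOfAdj hadj) ?_
  rw [hM.support_eq_verts, (IsMatching.subgraphOfAdj hadj).support_eq_verts,
    subgraphOfAdj_verts, Set.disjoint_insert_right, Set.disjoint_singleton_right]
  exact ⟨hu, hw⟩

variable [Finite V]

lemma indepNum_bddAbove (G : SimpleGraph V) :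
    BddAbove {n | ∃ s : Set V, G.IsIndepSet' s ∧ s.ncard = n} :=
  ⟨Nat.card V, by rintro _ ⟨s, -, rfl⟩; exact Set.ncard_le_card s⟩

lemma ncard_le_indepNum {s : Set V} (hs : G.IsIndepSet' s) :
    s.ncard ≤ indepNum G :=
  le_csSup (indepNum_bddAbove G) ⟨s, hs, rfl⟩

lemma exists_isIndepSet'_ncard_eq_indepNum (G : SimpleGraph V) :
    ∃ s : Set V, G.IsIndepSet' s ∧ s.ncard = indepNum G :=
  Nat.sSup_mem (by exact ⟨0, ∅, Set.pairwise_empty _, Set.ncard_empty V⟩)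
    (indepNum_bddAbove G)

lemma matchNum_bddAbove (G : SimpleGraph V) :
    BddAbove {n | ∃ M : G.Subgraph, M.IsMatching ∧ M.edgeSet.ncard = n} :=
  ⟨Nat.card (Sym2 V), by rintro _ ⟨M, -, rfl⟩; exact Set.ncard_le_card _⟩

lemma exists_isMatching_ncard_eq_matchNum (G : SimpleGraph V) :
    ∃ M : G.Subgraph, M.IsMatching ∧ M.edgeSet.ncard = matchNum G :=
  Nat.sSup_mem (by exact ⟨0, ⊥, fun _ hv => hv.elim, by simp⟩) (matchNum_bddAbove G)

/-- A matching of `G` all of whose edges lie in `H` is also a matching of `H`. -/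
lemma SimpleGraph.Subgraph.IsMatching.ncard_edgeSet_le_matchNum {M : G.Subgraph}
    (hM : M.IsMatching) (hMH : M.edgeSet ⊆ H.edgeSet) : M.edgeSet.ncard ≤ matchNum H := by
  let N : H.Subgraph :=
    ⟨M.verts, M.Adj, fun hab => hMH (Subgraph.mem_edgeSet.mpr hab), M.edge_vert, M.symm⟩
  exact le_csSup (matchNum_bddAbove H) ⟨N, hM, rfl⟩

lemma matchNum_mono (h : H ≤ G) : matchNum H ≤ matchNum G := by
  obtain ⟨M, hM, hcard⟩ := exists_isMatching_ncard_eq_matchNum H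
  exact hcard ▸ hM.ncard_edgeSet_le_matchNum (M.edgeSet_subset.trans (edgeSet_mono h))

lemma matchNum_deleteEdges_eq_of_notMem {M : G.Subgraph} (hM : M.IsMatching)
    (hMcard : M.edgeSet.ncard = matchNum G) {e : Sym2 V} (he : e ∉ M.edgeSet) :
    matchNum (G.deleteEdges {e}) = matchNum G := by
  refine (matchNum_mono (G.deleteEdges_le {e})).antisymm (hMcard ▸ ?_)
  refine hM.ncard_edgeSet_le_matchNum fun e' he' => ?_
  rw [edgeSet_deleteEdges]
  exact ⟨M.edgeSet_subset he', fun h => he (Set.mem_singleton_iff.mp h ▸ he')⟩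

lemma SimpleGraph.Walk.IsCycle.exists_mem_edges_matchNum_deleteEdges_eq {v : V}
    {c : G.Walk v v} (hc : c.IsCycle) :
    ∃ e ∈ c.edges, matchNum (G.deleteEdges {e}) = matchNum G := by
  obtain ⟨M, hM, hMcard⟩ := exists_isMatching_ncard_eq_matchNum G
  obtain ⟨e, he, heM⟩ := hc.exists_mem_edges_notMem_edgeSet hM
  exact ⟨e, he, matchNum_deleteEdges_eq_of_notMem hM hMcard heM⟩

lemma ncard_add_ncard_edgeSet_le_card {A : Set V} (hA : G.IsIndepSet' A)
    {M : G.Subgraph} (hM : M.IsMatching) : A.ncard + M.edgeSet.ncard ≤ Nat.card V := by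
  have hout : ∀ e : Sym2 V, ∃ v ∈ e, e ∈ M.edgeSet → v ∉ A := by
    intro e
    induction e using Sym2.ind with
    | _ a b =>
      by_cases ha : a ∈ A
      · refine ⟨b, Sym2.mem_mk_right a b, fun he hb => ?_⟩
        have hadj : G.Adj a b := M.adj_sub he
        exact hA ha hb hadj.ne hadj
      · exact ⟨a, Sym2.mem_mk_left a b, fun _ => ha⟩
  choose f hfe hfA using hout
  have hle : M.edgeSet.ncard ≤ Aᶜ.ncard :=
    Set.ncard_le_ncard_of_injOn f hfA fun e he e' he' h =>
      hM.eq_of_mem_edgeSet_of_mem he he' (hfe e) (h ▸ hfe e')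
  have := Set.ncard_le_card A
  rw [Set.ncard_compl] at hle
  omega

lemma indepNum_add_matchNum_le_card (G : SimpleGraph V) :
    indepNum G + matchNum G ≤ Nat.card V := by
  obtain ⟨A, hA, hAcard⟩ := exists_isIndepSet'_ncard_eq_indepNum G
  obtain ⟨M, hM, hMcard⟩ := exists_isMatching_ncard_eq_matchNum G
  exact hAcard ▸ hMcard ▸ ncard_add_ncard_edgeSet_le_card hA hM

lemma indepNum_deleteEdges_le (G : SimpleGraph V) (e : Sym2 V) :
    indepNum (G.deleteEdges {e}) ≤ indepNum G + 1 := by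
  induction e using Sym2.ind with | _ x y => ?_
  obtain ⟨A, hA, hAcard⟩ := exists_isIndepSet'_ncard_eq_indepNum (G.deleteEdges {s(x, y)})
  have hind : G.IsIndepSet' (A \ {x}) := by
    rintro a ⟨ha, hax⟩ b ⟨hb, hbx⟩ hab hadj
    refine hA ha hb hab ((deleteEdges_adj ..).mpr ⟨hadj, fun h => ?_⟩)
    rcases Sym2.eq_iff.mp (Set.mem_singleton_iff.mp h) with ⟨rfl, -⟩ | ⟨-, rfl⟩
    exacts [hax rfl, hbx rfl]
  have := Set.pred_ncard_le_ncard_sdiff_singleton A x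
  have := ncard_le_indepNum hind
  omega

lemma SimpleGraph.Subgraph.ncard_edgeSet_sup_subgraphOfAdj (M : G.Subgraph)
    {u w : V} (hadj : G.Adj u w) (hu : u ∉ M.verts) :
    (M ⊔ G.subgraphOfAdj hadj).edgeSet.ncard = M.edgeSet.ncard + 1 := by
  rw [edgeSet_sup, edgeSet_subgraphOfAdj, Set.union_singleton]
  exact Set.ncard_insert_of_notMem fun h => hu (M.edge_vert h)

/-- A longest path inside `s` cannot be extended at its start, so by acyclicity every
neighbour in `s` of its start is its second vertex. -/
lemma SimpleGraph.IsAcyclic.exists_mem_neighborSet_inter_subsingleton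
    (hH : H.IsAcyclic) {s : Set V} (hs : s.Nonempty) :
    ∃ u ∈ s, (H.neighborSet u ∩ s).Subsingleton := by
  have := Fintype.ofFinite V
  let L := {n | ∃ (x y : V) (p : H.Walk x y),
    p.IsPath ∧ (∀ z ∈ p.support, z ∈ s) ∧ p.length = n}
  have hbdd : BddAbove L :=
    ⟨Fintype.card V, by rintro _ ⟨x, y, p, hp, -, rfl⟩; exact hp.length_lt.le⟩
  obtain ⟨u₀, hu₀⟩ := hs
  obtain ⟨x, y, p, hp, hps, hlen⟩ :=
    Nat.sSup_mem (by exact ⟨0, u₀, u₀, .nil, .nil, by simpa, rfl⟩) hbdd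
  have hsnd : ∀ w ∈ H.neighborSet x ∩ s, w = p.snd := by
    rintro w ⟨hadj, hws⟩
    refine hH.eq_snd_of_adj_start hp hadj (by_contra fun hwp => ?_)
    have hlonger : (Walk.cons (H.adj_symm hadj) p).length ∈ L :=
      ⟨w, y, _, hp.cons hwp, by simpa [hws] using hps, rfl⟩
    have := le_csSup hbdd hlonger
    rw [Walk.length_cons, hlen] at this
    omega
  exact ⟨x, hps x p.start_mem_support,
    fun w₁ h₁ w₂ h₂ => (hsnd w₁ h₁).trans (hsnd w₂ h₂).symm⟩

lemma SimpleGraph.IsAcyclic.exists_indep_matching_ncard_le (hH : H.IsAcyclic) (s : Set V) :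
    ∃ A ⊆ s, H.IsIndepSet' A ∧ ∃ M : H.Subgraph, M.IsMatching ∧ M.verts ⊆ s ∧
      s.ncard ≤ A.ncard + M.edgeSet.ncard := by
  induction hn : s.ncard using Nat.strong_induction_on generalizing s with
  | _ n ih =>
  rcases s.eq_empty_or_nonempty with rfl | hs
  · exact ⟨∅, le_rfl, Set.pairwise_empty _, ⊥, fun _ hv => hv.elim, le_rfl,
      by simp [← hn]⟩
  obtain ⟨u, hus, hN⟩ := hH.exists_mem_neighborSet_inter_subsingleton hs
  set N := H.neighborSet u ∩ s
  have huN : u ∉ N := fun h => H.irrefl h.1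
  have hcard := Set.ncard_sdiff_add_ncard_of_subset (s := insert u N)
    (Set.insert_subset hus Set.inter_subset_right)
  rw [Set.ncard_insert_of_notMem huN, hn] at hcard
  obtain ⟨A, hAt, hA, M, hM, hMt, hbound⟩ := ih _ (by omega) (s \ insert u N) rfl
  have huA : u ∉ A := fun h => (hAt h).2 (Set.mem_insert u N)
  have hA' : H.IsIndepSet' (insert u A) :=
    hA.insert fun a ha hadj => (hAt ha).2 (Or.inr ⟨hadj, (hAt ha).1⟩)
  refine ⟨insert u A, Set.insert_subset hus (hAt.trans Set.sdiff_subset), hA', ?_⟩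
  rw [Set.ncard_insert_of_notMem huA]
  have huM : u ∉ M.verts := fun h => (hMt h).2 (Set.mem_insert u N)
  rcases hN.eq_empty_or_singleton with hN0 | ⟨w, hNw⟩
  · have : N.ncard = 0 := by rw [hN0, Set.ncard_empty]
    exact ⟨M, hM, hMt.trans Set.sdiff_subset, by omega⟩
  · have : N.ncard = 1 := by rw [hNw, Set.ncard_singleton]
    have hw : w ∈ N := hNw ▸ rfl
    have hwM : w ∉ M.verts := fun h => (hMt h).2 (Or.inr hw)
    obtain ⟨hwu : H.Adj u w, hws⟩ := hw
    refine ⟨M ⊔ H.subgraphOfAdj hwu, hM.sup_subgraphOfAdj hwu huM hwM, ?_, ?_⟩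
    · rw [Subgraph.verts_sup, subgraphOfAdj_verts]
      exact Set.union_subset (hMt.trans Set.sdiff_subset) (Set.pair_subset hus hws)
    · rw [M.ncard_edgeSet_sup_subgraphOfAdj hwu huM]
      omega

lemma indepNum_add_matchNum_of_isAcyclic (hH : H.IsAcyclic) :
    indepNum H + matchNum H = Nat.card V := by
  obtain ⟨A, -, hA, M, hM, -, hbound⟩ := hH.exists_indep_matching_ncard_le Set.univ
  have := ncard_le_indepNum hA
  have := hM.ncard_edgeSet_le_matchNum M.edgeSet_subset
  have := indepNum_add_matchNum_le_card H
  rw [Set.ncard_univ] at hbound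
  omega

/-- A cycle edge is not a bridge, so deleting it leaves a connected graph with one edge fewer
than vertices. -/
lemma SimpleGraph.Connected.isTree_deleteEdges_of_mem_edges (hconn : G.Connected)
    (hcard : G.edgeSet.ncard = Nat.card V) {v : V} {c : G.Walk v v} (hc : c.IsCycle)
    {e : Sym2 V} (he : e ∈ c.edges) : (G.deleteEdges {e}).IsTree := by
  induction e using Sym2.ind with | _ x y => ?_
  refine isTree_iff_connected_and_card.mpr
    ⟨hconn.connected_delete_edge_of_not_isBridge fun hb => hb.notMem_edges_of_isCycle hc he, ?_⟩
  rw [Nat.card_coe_set_eq, edgeSet_deleteEdges,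
    Set.ncard_sdiff_singleton_add_one (c.edges_subset_edgeSet he), hcard]

end

theorem stmt7 {V : Type*} [Fintype V] (G : SimpleGraph V)
    (hconn : G.Connected) (huni : G.edgeSet.ncard = Fintype.card V)
    {v : V} (c : G.Walk v v) (hc : c.IsCycle) :
    indepNum G + matchNum G = Fintype.card V - 1 ↔
      ∀ e ∈ c.edges, indepNum G < indepNum (G.deleteEdges {e}) := by
  rw [← Nat.card_eq_fintype_card] at huni ⊢
  have htree : ∀ e ∈ c.edges,
      indepNum (G.deleteEdges {e}) + matchNum (G.deleteEdges {e}) = Nat.card V := fun e he =>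
    indepNum_add_matchNum_of_isAcyclic (hconn.isTree_deleteEdges_of_mem_edges huni hc he).isAcyclic
  have hμle : ∀ e, matchNum (G.deleteEdges {e}) ≤ matchNum G := fun e =>
    matchNum_mono (G.deleteEdges_le {e})
  -- `Nat.card V - 1` is truncated subtraction
  have hn : 0 < Nat.card V := have := hconn.nonempty; Nat.card_pos
  constructor
  · intro hsum e he
    have := htree e he
    have := hμle e
    omega
  · intro hcrit
    obtain ⟨e, he, hμ⟩ := hc.exists_mem_edges_matchNum_deleteEdges_eq
    have := htree e he
    have := hcrit e he
    have := indepNum_deleteEdges_le G e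
    omega
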